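/- For every x ∈ X and every ordinal α ∈ [‖x‖,λ), the set V_α(x) is open in the topological space (X,τ); that is, for every y ∈ V_α(x) there exists an ordinal β ∈ [‖y‖,λ) with V_β(y) ⊆ V_α(x). -/

import Mathlib

universe u v

open Ordinal Set Topology Cardinal

namespace LawsonExample

def Xset (lam : Cardinal.{u}) : Set (Ordinal.{u} → Fin 3) :=
  {x | (∀ γ : Ordinal.{u}, lam.ord ≤ γ → x γ = 2) ∧ {γ : Ordinal.{u} | x γ ≠ 2}.Finite}

noncomputable def nrm (x : Ordinal.{u} → Fin 3) : Ordinal.{u} :=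
  sInf {α | ∀ γ, α ≤ γ → x γ = 2}

noncomputable def Vnbhd (lam : Cardinal.{u}) (x : ↥(Xset lam)) (α : Ordinal.{u}) :
    Set ↥(Xset lam) :=
  if x.1 0 = 2 then {x}
  else if x.1 0 = 1 then
    {y | (∀ γ, 1 ≤ γ → γ < α → y.1 γ = x.1 γ) ∧
         (∀ γ, α ≤ γ → γ < lam.ord → y.1 γ ≠ 1) ∧
         (y.1 0 = 1 ∨ (y.1 0 = 2 ∧ α < nrm y.1))}
  else
    {y | (∀ γ, 1 ≤ γ → γ < α → y.1 γ = x.1 γ) ∧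
         (y.1 0 = 0 ∨ (y.1 0 = 2 ∧ α < nrm y.1 ∧ y.1 (Ordinal.pred (nrm y.1)) = 1))}

def tauSet (lam : Cardinal.{u}) : Set (Set ↥(Xset lam)) :=
  {U | ∀ x ∈ U, ∃ α : Ordinal.{u}, nrm x.1 ≤ α ∧ α < lam.ord ∧ Vnbhd lam x α ⊆ U}

lemma nrm_spec {lam : Cardinal.{u}} (x : ↥(Xset lam)) {γ : Ordinal.{u}}
    (h : nrm x.1 ≤ γ) : x.1 γ = 2 := by
  have hne : {α : Ordinal.{u} | ∀ γ, α ≤ γ → x.1 γ = 2}.Nonempty :=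
    ⟨lam.ord, fun γ hγ => x.2.1 γ hγ⟩
  exact csInf_mem hne γ h

lemma nrm_lt {lam : Cardinal.{u}} (hlam : ℵ₀ ≤ lam) (x : ↥(Xset lam)) :
    nrm x.1 < lam.ord := by
  have hlim : Order.IsSuccLimit (lam.ord) := Cardinal.isSuccLimit_ord hlam
  rcases eq_empty_or_nonempty {γ | x.1 γ ≠ 2} with he | hne
  · have h0 : nrm x.1 ≤ 0 := csInf_le' (fun γ _ => by
      by_contra hc
      exact (eq_empty_iff_forall_notMem.1 he γ) hc)
    exact lt_of_le_of_lt h0 hlim.pos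
  · set m := sSup {γ | x.1 γ ≠ 2} with hm_def
    have hmem : m ∈ {γ | x.1 γ ≠ 2} := hne.csSup_mem x.2.2
    have hm : m < lam.ord := lt_of_not_ge fun h => hmem (x.2.1 m h)
    have hb : nrm x.1 ≤ m + 1 := csInf_le' (fun γ hγ => by
      by_contra hc
      have hle : γ ≤ m := le_csSup x.2.2.bddAbove hc
      rw [Ordinal.add_one_eq_succ] at hγ
      exact absurd hγ (not_le.2 (lt_of_le_of_lt hle (Order.lt_succ m))))
    have : m + 1 < lam.ord := by
      rw [Ordinal.add_one_eq_succ]; exact hlim.succ_lt hm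
    exact lt_of_le_of_lt hb this

lemma fin3_cases (a : Fin 3) : a = 0 ∨ a = 1 ∨ a = 2 := by revert a; decide

lemma mem_Vnbhd_self {lam : Cardinal.{u}} (x : ↥(Xset lam)) {α : Ordinal.{u}}
    (h : nrm x.1 ≤ α) : x ∈ Vnbhd lam x α := by
  rcases fin3_cases (x.1 0) with h0 | h0 | h0
  · have h2 : x.1 0 ≠ 2 := by rw [h0]; decide
    have h1 : x.1 0 ≠ 1 := by rw [h0]; decide
    rw [Vnbhd, if_neg h2, if_neg h1]
    exact ⟨fun γ _ _ => rfl, Or.inl h0⟩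
  · have h2 : x.1 0 ≠ 2 := by rw [h0]; decide
    rw [Vnbhd, if_neg h2, if_pos h0]
    refine ⟨fun γ _ _ => rfl, fun γ hγ _ => ?_, Or.inl h0⟩
    rw [nrm_spec x (le_trans h hγ)]; decide
  · rw [Vnbhd, if_pos h0]; exact rfl

lemma Vnbhd_mono {lam : Cardinal.{u}} (x : ↥(Xset lam)) {α β : Ordinal.{u}}
    (hα : nrm x.1 ≤ α) (hαβ : α ≤ β) : Vnbhd lam x β ⊆ Vnbhd lam x α := by
  rcases fin3_cases (x.1 0) with h0 | h0 | h0
  · have h2 : x.1 0 ≠ 2 := by rw [h0]; decide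
    have h1 : x.1 0 ≠ 1 := by rw [h0]; decide
    rw [Vnbhd, Vnbhd, if_neg h2, if_neg h1, if_neg h2, if_neg h1]
    rintro y ⟨hr, hy⟩
    refine ⟨fun γ h1γ h2γ => hr γ h1γ (lt_of_lt_of_le h2γ hαβ), ?_⟩
    rcases hy with hy | ⟨hy2, hylt, hyp⟩
    · exact Or.inl hy
    · exact Or.inr ⟨hy2, lt_of_le_of_lt hαβ hylt, hyp⟩
  · have h2 : x.1 0 ≠ 2 := by rw [h0]; decide
    rw [Vnbhd, Vnbhd, if_neg h2, if_pos h0, if_neg h2, if_pos h0]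
    rintro y ⟨hr, hns, hy⟩
    have hα1 : 1 ≤ α := by
      by_contra hc
      have : α = 0 := Ordinal.lt_one_iff_zero.1 (not_le.1 hc)
      have : x.1 0 = 2 := nrm_spec x (by rw [← this]; exact hα)
      exact h2 this
    refine ⟨fun γ h1γ h2γ => hr γ h1γ (lt_of_lt_of_le h2γ hαβ), ?_, ?_⟩
    · intro γ hγ hγlt
      by_cases hγβ : β ≤ γ
      · exact hns γ hγβ hγlt
      · have h1γ : 1 ≤ γ := le_trans hα1 hγ
        rw [hr γ h1γ (not_le.1 hγβ)]
        rw [nrm_spec x (le_trans hα hγ)]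
        decide
    · rcases hy with hy | ⟨hy2, hylt⟩
      · exact Or.inl hy
      · exact Or.inr ⟨hy2, lt_of_le_of_lt hαβ hylt⟩
  · rw [Vnbhd, Vnbhd, if_pos h0, if_pos h0]

noncomputable def tau (lam : Cardinal.{u}) (hlam : ℵ₀ ≤ lam) :
    TopologicalSpace ↥(Xset lam) where
  IsOpen U := U ∈ tauSet lam
  isOpen_univ := fun x _ =>
    ⟨nrm x.1, le_rfl, nrm_lt hlam x, subset_univ _⟩
  isOpen_inter := by
    intro U V hU hV x hx
    obtain ⟨α, hα1, hα2, hα3⟩ := hU x hx.1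
    obtain ⟨β, hβ1, hβ2, hβ3⟩ := hV x hx.2
    refine ⟨max α β, le_trans hα1 (le_max_left _ _), max_lt hα2 hβ2, fun y hy => ?_⟩
    exact ⟨hα3 (Vnbhd_mono x hα1 (le_max_left _ _) hy),
           hβ3 (Vnbhd_mono x hβ1 (le_max_right _ _) hy)⟩
  isOpen_sUnion := by
    intro S hS x hx
    obtain ⟨U, hU, hxU⟩ := hx
    obtain ⟨α, hα1, hα2, hα3⟩ := hS U hU x hxU
    exact ⟨α, hα1, hα2, fun y hy => ⟨U, hU, hα3 hy⟩⟩


/-- The semilattice operation of `X`: pointwise minimum. -/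
noncomputable def pmin (lam : Cardinal.{u}) (x y : ↥(Xset lam)) : ↥(Xset lam) :=
  ⟨fun γ => min (x.1 γ) (y.1 γ), by
    constructor
    · intro γ hγ
      show min (x.1 γ) (y.1 γ) = 2
      rw [x.2.1 γ hγ, y.2.1 γ hγ, min_self]
    · refine (x.2.2.union y.2.2).subset fun γ hγ => ?_
      have hγ' : min (x.1 γ) (y.1 γ) ≠ 2 := hγ
      simp only [mem_union, mem_setOf_eq]
      by_contra hc
      push_neg at hc
      rw [hc.1, hc.2, min_self] at hγ'
      exact hγ' rfl⟩

/-- `B` is a base of the topology `t`: it consists of open sets, and every open set is a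
union of members of `B`. -/
def IsBase {X : Type v} (t : TopologicalSpace X) (B : Set (Set X)) : Prop :=
  (∀ U ∈ B, IsOpen[t] U) ∧ ∀ U, IsOpen[t] U → ∃ S ⊆ B, U = ⋃₀ S

/-- The family `ℬ = {V_α(x) : x ∈ X, α ∈ [‖x‖, λ)}`. -/
def Vfamily (lam : Cardinal.{u}) : Set (Set ↥(Xset lam)) :=
  {W | ∃ (x : ↥(Xset lam)) (α : Ordinal.{u}), nrm x.1 ≤ α ∧ α < lam.ord ∧ W = Vnbhd lam x α}

/-- The weight of a topological space: the smallest cardinality of a base of its topology. -/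
noncomputable def weight {X : Type v} (t : TopologicalSpace X) : Cardinal.{v} :=
  sInf {c : Cardinal.{v} | ∃ B : Set (Set X), IsBase t B ∧ c = Cardinal.mk ↥B}

/-- The function `𝟎_β`, with `𝟎_β β = 0` and `𝟎_β γ = 2` for `γ ≠ β`. -/
noncomputable def zeroF (β : Ordinal.{u}) : Ordinal.{u} → Fin 3 :=
  fun γ => if γ = β then 0 else 2

/-- The function `𝟏_β`, with `𝟏_β β = 1` and `𝟏_β γ = 2` for `γ ≠ β`. -/
noncomputable def oneF (β : Ordinal.{u}) : Ordinal.{u} → Fin 3 :=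
  fun γ => if γ = β then 1 else 2

lemma zeroF_mem (lam : Cardinal.{u}) {β : Ordinal.{u}} (h : β < lam.ord) :
    zeroF β ∈ Xset lam := by
  constructor
  · intro γ hγ
    have hne : γ ≠ β := fun e => absurd h (not_lt.2 (e ▸ hγ))
    simp [zeroF, hne]
  · refine (finite_singleton β).subset fun γ hγ => ?_
    simp only [mem_setOf_eq, zeroF] at hγ
    by_contra hc
    simp only [mem_singleton_iff] at hc
    rw [if_neg hc] at hγ
    exact hγ rfl

lemma oneF_mem (lam : Cardinal.{u}) {β : Ordinal.{u}} (h : β < lam.ord) :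
    oneF β ∈ Xset lam := by
  constructor
  · intro γ hγ
    have hne : γ ≠ β := fun e => absurd h (not_lt.2 (e ▸ hγ))
    simp [oneF, hne]
  · refine (finite_singleton β).subset fun γ hγ => ?_
    simp only [mem_setOf_eq, oneF] at hγ
    by_contra hc
    simp only [mem_singleton_iff] at hc
    rw [if_neg hc] at hγ
    exact hγ rfl

/-- `𝟎_β` as an element of `X` (for `β < λ`). -/
noncomputable def zeroE (lam : Cardinal.{u}) {β : Ordinal.{u}} (h : β < lam.ord) :
    ↥(Xset lam) := ⟨zeroF β, zeroF_mem lam h⟩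

/-- `𝟏_β` as an element of `X` (for `β < λ`). -/
noncomputable def oneE (lam : Cardinal.{u}) {β : Ordinal.{u}} (h : β < lam.ord) :
    ↥(Xset lam) := ⟨oneF β, oneF_mem lam h⟩


/-!
The neighbourhoods are nested: if `y ∈ V_α(x)` and `α ≤ β`, then `V_β(y) ⊆ V_α(x)`. For
`y ∈ X₂` this is because `V_β(y) = {y}`; otherwise `y(0) = x(0)`, and a point agreeing with `y`
on `[1, β)` agrees with `x` on `[1, α)`. For `y ∈ X₁` one also needs that `V_β(y)` avoids the
value `1` on `[α, λ)`: on `[β, λ)` by definition, and on `[α, β)` because there it copies `y`.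
Hence `β = max α ‖y‖ < λ` witnesses openness at `y`.
-/

section Nested

variable {lam : Cardinal.{u}} {x y : ↥(Xset lam)} {α β : Ordinal.{u}}

lemma Vnbhd_of_eq_two (hx : x.1 0 = 2) : Vnbhd lam x α = {x} := by
  rw [Vnbhd, if_pos hx]

lemma mem_Vnbhd_of_eq_one (hx : x.1 0 = 1) :
    y ∈ Vnbhd lam x α ↔ EqOn y.1 x.1 (Ico 1 α) ∧ (∀ γ ∈ Ico α lam.ord, y.1 γ ≠ 1) ∧
      (y.1 0 = 1 ∨ y.1 0 = 2 ∧ α < nrm y.1) := by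
  rw [Vnbhd, if_neg (by simp [hx]), if_pos hx]
  simp only [mem_ofPred_eq, EqOn, mem_Ico, and_imp]

lemma mem_Vnbhd_of_eq_zero (hx : x.1 0 = 0) :
    y ∈ Vnbhd lam x α ↔ EqOn y.1 x.1 (Ico 1 α) ∧
      (y.1 0 = 0 ∨ y.1 0 = 2 ∧ α < nrm y.1 ∧ y.1 (Ordinal.pred (nrm y.1)) = 1) := by
  rw [Vnbhd, if_neg (by simp [hx]), if_neg (by simp [hx])]
  simp only [mem_ofPred_eq, EqOn, mem_Ico, and_imp]

lemma one_le_of_nrm_le (hx : x.1 0 ≠ 2) (hα : nrm x.1 ≤ α) : 1 ≤ α :=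
  Order.one_le_iff_ne_zero.2 fun h0 => hx (nrm_spec x (h0 ▸ hα))

lemma apply_zero_eq_of_mem_Vnbhd (hy : y ∈ Vnbhd lam x α) (hy2 : y.1 0 ≠ 2) :
    y.1 0 = x.1 0 := by
  rcases fin3_cases (x.1 0) with hx0 | hx0 | hx0
  · rw [hx0]
    exact ((mem_Vnbhd_of_eq_zero hx0).1 hy).2.resolve_right fun h => hy2 h.1
  · rw [hx0]
    exact ((mem_Vnbhd_of_eq_one hx0).1 hy).2.2.resolve_right fun h => hy2 h.1
  · rw [Vnbhd_of_eq_two hx0, mem_singleton_iff] at hy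
    rw [hy]

lemma Vnbhd_subset_of_mem_of_eq_zero (hx : x.1 0 = 0) (hy0 : y.1 0 = 0)
    (hy : y ∈ Vnbhd lam x α) (hαβ : α ≤ β) : Vnbhd lam y β ⊆ Vnbhd lam x α := by
  intro z hz
  obtain ⟨hzy, hz0⟩ := (mem_Vnbhd_of_eq_zero hy0).1 hz
  have hyx := ((mem_Vnbhd_of_eq_zero hx).1 hy).1
  exact (mem_Vnbhd_of_eq_zero hx).2
    ⟨(hzy.mono (Ico_subset_Ico_right hαβ)).trans hyx,
      hz0.imp_right (And.imp_right (And.imp_left hαβ.trans_lt))⟩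

lemma Vnbhd_subset_of_mem_of_eq_one (hx : x.1 0 = 1) (hα : nrm x.1 ≤ α) (hy0 : y.1 0 = 1)
    (hy : y ∈ Vnbhd lam x α) (hαβ : α ≤ β) : Vnbhd lam y β ⊆ Vnbhd lam x α := by
  intro z hz
  obtain ⟨hzy, hz1, hz0⟩ := (mem_Vnbhd_of_eq_one hy0).1 hz
  obtain ⟨hyx, hy1, -⟩ := (mem_Vnbhd_of_eq_one hx).1 hy
  have hα1 : 1 ≤ α := one_le_of_nrm_le (by simp [hx]) hα
  have hz_ne_one : ∀ γ ∈ Ico α lam.ord, z.1 γ ≠ 1 := by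
    intro γ hγ
    by_cases hγβ : γ < β
    · rw [hzy ⟨hα1.trans hγ.1, hγβ⟩]
      exact hy1 γ hγ
    · exact hz1 γ ⟨not_lt.1 hγβ, hγ.2⟩
  exact (mem_Vnbhd_of_eq_one hx).2
    ⟨(hzy.mono (Ico_subset_Ico_right hαβ)).trans hyx, hz_ne_one,
      hz0.imp_right (And.imp_right hαβ.trans_lt)⟩

lemma Vnbhd_subset_of_mem (hα : nrm x.1 ≤ α) (hy : y ∈ Vnbhd lam x α) (hαβ : α ≤ β) :
    Vnbhd lam y β ⊆ Vnbhd lam x α := by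
  by_cases hy2 : y.1 0 = 2
  · rw [Vnbhd_of_eq_two hy2]
    exact singleton_subset_iff.2 hy
  have hyx := apply_zero_eq_of_mem_Vnbhd hy hy2
  rcases fin3_cases (x.1 0) with hx0 | hx0 | hx0
  · exact Vnbhd_subset_of_mem_of_eq_zero hx0 (hyx.trans hx0) hy hαβ
  · exact Vnbhd_subset_of_mem_of_eq_one hx0 hα (hyx.trans hx0) hy hαβ
  · exact absurd (hyx.trans hx0) hy2

end Nested

/-- **Claim 2.** For every `x ∈ X` and every ordinal `α ∈ [‖x‖, λ)` the set
`V_α(x)` is open in `(X, τ)`; that is, every `y ∈ V_α(x)` admits `β ∈ [‖y‖, λ)` with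
`V_β(y) ⊆ V_α(x)`. -/
theorem isOpen_Vnbhd (lam : Cardinal.{u}) (hlam : ℵ₀ ≤ lam) (x : ↥(Xset lam))
    (α : Ordinal.{u}) (hα1 : nrm x.1 ≤ α) (hα2 : α < lam.ord) :
    IsOpen[tau lam hlam] (Vnbhd lam x α) ∧
    ∀ y ∈ Vnbhd lam x α, ∃ β : Ordinal.{u}, nrm y.1 ≤ β ∧ β < lam.ord ∧
      Vnbhd lam y β ⊆ Vnbhd lam x α := by
  have nested : ∀ y ∈ Vnbhd lam x α, ∃ β : Ordinal.{u}, nrm y.1 ≤ β ∧ β < lam.ord ∧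
      Vnbhd lam y β ⊆ Vnbhd lam x α := fun y hy =>
    ⟨max α (nrm y.1), le_max_right _ _, max_lt hα2 (nrm_lt hlam y),
      Vnbhd_subset_of_mem hα1 hy (le_max_left _ _)⟩
  exact ⟨nested, nested⟩

end LawsonExample
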